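/- arXiv:math/0412534 — 3 statements merged into one kernel-verified Lean document; each statement's English description precedes it below -/
import Mathlib

section
/- For every h > 0, the series defining the one-dimensional discrete heat kernel w^h_j(t) converges absolutely for every j ∈ ℤ and t ≥ 0, w^h_j(0) = 1/h if j = 0 and w^h_j(0) = 0 otherwise, and for every t > 0 and j ∈ ℤ, the function t ↦ w^h_j(t) is differentiable with d/dt w^h_j(t) = (w^h_{j+1}(t) − 2 w^h_j(t) + w^h_{j−1}(t))/h². -/
noncomputable section

/-- The `k`-th term of the series defining the one-dimensional discrete heat kernel. -/
def wterm (h : ℝ) (j : ℤ) (t : ℝ) (k : ℕ) : ℝ :=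
  if j ≤ (k : ℤ) then
    (t / h ^ 2) ^ (2 * (k : ℤ) - j).toNat /
      ((((k : ℤ) - j).toNat.factorial : ℝ) * (k.factorial : ℝ))
  else 0

/-- The one-dimensional discrete heat kernel
`w^h_j(t) = (1/h) e^{−2t/h²} ∑_{k ≥ max(j,0)} (t/h²)^{2k−j} / ((k−j)! k!)`. -/
def wker (h : ℝ) (j : ℤ) (t : ℝ) : ℝ :=
  (1 / h) * Real.exp (-2 * t / h ^ 2) * ∑' k : ℕ, wterm h j t k

/-!
With `x = t/h²` and `x^n/n!` read as `0` for negative `n`, the series is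
`B_j(x) = ∑_{k ∈ ℤ} x^{k-j}/(k-j)! · x^k/k!`. Since `(x^n/n!)' = x^{n-1}/(n-1)!` for every
`n ∈ ℤ`, the product rule turns the `k`-th term of `B_j` into the `k`-th term of `B_{j+1}` plus
the `(k-1)`-th term of `B_{j-1}`; as `k ↦ k - 1` is a bijection of `ℤ`, this gives
`B_j' = B_{j+1} + B_{j-1}`, the termwise differentiation being justified by the domination
`|x^{k-j}/(k-j)! · x^k/k!| ≤ e^R R^k/k!` for `|x| ≤ R`. The factor `e^{-2t/h²}` contributes
the term `-2 w_j` of the discrete Laplacian.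
-/

open Real

def expTerm (n : ℤ) (x : ℝ) : ℝ :=
  if 0 ≤ n then x ^ n.toNat / n.toNat.factorial else 0

theorem expTerm_of_neg {n : ℤ} (hn : n < 0) (x : ℝ) : expTerm n x = 0 :=
  if_neg hn.not_ge

theorem expTerm_natCast (n : ℕ) (x : ℝ) : expTerm n x = x ^ n / n.factorial := by
  simp [expTerm]

theorem support_expTerm_subset (x : ℝ) :
    Function.support (expTerm · x) ⊆ Set.range ((↑) : ℕ → ℤ) := by
  intro n hn
  have hn₀ : 0 ≤ n := by
    by_contra! hneg
    exact hn (expTerm_of_neg hneg x)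
  exact ⟨n.toNat, Int.toNat_of_nonneg hn₀⟩

theorem expTerm_zero_right (n : ℤ) : expTerm n 0 = if n = 0 then 1 else 0 := by
  unfold expTerm
  split_ifs <;> simp_all
  omega

theorem abs_expTerm (n : ℤ) (x : ℝ) : |expTerm n x| = expTerm n |x| := by
  unfold expTerm
  split_ifs <;> simp [abs_div, abs_pow]

theorem expTerm_le_exp (n : ℤ) {x : ℝ} (hx : 0 ≤ x) : expTerm n x ≤ exp x := by
  unfold expTerm
  split_ifs
  · exact pow_div_factorial_le_exp x hx _
  · exact (exp_pos x).le

theorem expTerm_le_expTerm (n : ℤ) {x y : ℝ} (hx : 0 ≤ x) (hxy : x ≤ y) :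
    expTerm n x ≤ expTerm n y := by
  unfold expTerm
  split_ifs
  · gcongr
  · rfl

theorem summable_expTerm (x : ℝ) : Summable fun n : ℤ => expTerm n x := by
  refine (Nat.cast_injective.summable_iff
    (Function.support_subset_iff'.1 (support_expTerm_subset x))).1 ?_
  simpa [Function.comp_def, expTerm_natCast] using summable_pow_div_factorial x

theorem hasDerivAt_expTerm (n : ℤ) (x : ℝ) : HasDerivAt (expTerm n) (expTerm (n - 1) x) x := by
  rcases lt_or_ge n 0 with hn | hn
  · have hzero : expTerm n = fun _ => 0 := funext (expTerm_of_neg hn)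
    rw [hzero, expTerm_of_neg (by omega)]
    exact hasDerivAt_const x 0
  lift n to ℕ using hn
  rcases n with _ | m
  · have hone : expTerm (0 : ℕ) = fun _ => 1 := funext fun y => by simp [expTerm]
    rw [hone, expTerm_of_neg (by omega)]
    exact hasDerivAt_const x 1
  · have hpow : expTerm (m + 1 : ℕ) = fun y : ℝ => y ^ (m + 1) / (m + 1).factorial :=
      funext (expTerm_natCast (m + 1))
    rw [hpow, show ((m + 1 : ℕ) : ℤ) - 1 = m by omega, expTerm_natCast]
    refine ((hasDerivAt_pow (m + 1) x).div_const _).congr_deriv ?_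
    rw [Nat.factorial_succ, Nat.add_sub_cancel]
    push_cast
    field_simp

/-- `∑ₖ besselTerm j x k = I_j(2x)`, the modified Bessel function of the first kind. -/
def besselTerm (j : ℤ) (x : ℝ) (k : ℤ) : ℝ :=
  expTerm (k - j) x * expTerm k x

def besselSeries (j : ℤ) (x : ℝ) : ℝ :=
  ∑' k : ℤ, besselTerm j x k

theorem abs_besselTerm_le (j : ℤ) {x R : ℝ} (hx : |x| ≤ R) (k : ℤ) :
    |besselTerm j x k| ≤ exp R * expTerm k R := by
  rw [besselTerm, abs_mul, abs_expTerm, abs_expTerm]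
  exact mul_le_mul ((expTerm_le_exp _ (abs_nonneg x)).trans (exp_le_exp.2 hx))
    (expTerm_le_expTerm _ (abs_nonneg x) hx) (by rw [← abs_expTerm]; positivity) (exp_pos R).le

theorem summable_abs_besselTerm (j : ℤ) (x : ℝ) : Summable fun k => |besselTerm j x k| :=
  .of_nonneg_of_le (fun _ => abs_nonneg _) (abs_besselTerm_le j le_rfl)
    ((summable_expTerm |x|).mul_left _)

theorem hasDerivAt_besselTerm (j : ℤ) (x : ℝ) (k : ℤ) :
    HasDerivAt (fun y => besselTerm j y k)
      (besselTerm (j + 1) x k + besselTerm (j - 1) x (k - 1)) x := by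
  unfold besselTerm
  rw [show k - (j + 1) = k - j - 1 by ring, show k - 1 - (j - 1) = k - j by ring]
  exact (hasDerivAt_expTerm _ x).mul (hasDerivAt_expTerm k x)

theorem hasDerivAt_besselSeries (j : ℤ) (x : ℝ) :
    HasDerivAt (besselSeries j) (besselSeries (j + 1) x + besselSeries (j - 1) x) x := by
  have hx : x ∈ Set.Ioo (-(|x| + 1)) (|x| + 1) := abs_lt.1 (lt_add_one |x|)
  have hpred : Function.Injective fun k : ℤ => k - 1 := sub_left_injective
  have hshift : ∑' k, besselTerm (j - 1) x (k - 1) = besselSeries (j - 1) x :=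
    (Equiv.subRight 1).tsum_eq (besselTerm (j - 1) x)
  have hsum : ∑' k, (besselTerm (j + 1) x k + besselTerm (j - 1) x (k - 1))
      = besselSeries (j + 1) x + besselSeries (j - 1) x := by
    rw [(summable_abs_besselTerm _ x).of_abs.tsum_add
      ((summable_abs_besselTerm _ x).comp_injective hpred).of_abs, hshift]
    rfl
  rw [← hsum]
  refine hasDerivAt_tsum_of_isPreconnected
    (((summable_expTerm (|x| + 1)).add ((summable_expTerm (|x| + 1)).comp_injective hpred)).mul_left
      (exp (|x| + 1))) isOpen_Ioo (convex_Ioo _ _).isPreconnected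
    (fun k y _ => hasDerivAt_besselTerm j y k) (fun k y hy => ?_) hx
    (summable_abs_besselTerm j x).of_abs hx
  have hyR : |y| ≤ |x| + 1 := (abs_lt.2 hy).le
  rw [Real.norm_eq_abs, mul_add]
  exact (abs_add_le _ _).trans
    (add_le_add (abs_besselTerm_le _ hyR k) (abs_besselTerm_le _ hyR (k - 1)))

theorem besselSeries_zero_right (j : ℤ) : besselSeries j 0 = if j = 0 then 1 else 0 := by
  have hterm : besselTerm j 0 = fun k => if k = 0 then (if j = 0 then 1 else 0) else 0 := by
    funext k
    simp only [besselTerm, expTerm_zero_right]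
    split_ifs <;> first | omega | simp
  rw [besselSeries, hterm, tsum_ite_eq]

theorem wterm_eq_besselTerm (h : ℝ) (j : ℤ) (t : ℝ) (k : ℕ) :
    wterm h j t k = besselTerm j (t / h ^ 2) k := by
  unfold wterm besselTerm expTerm
  by_cases hjk : j ≤ k
  · rw [if_pos hjk, if_pos (by omega), if_pos (by omega), Int.toNat_natCast, div_mul_div_comm,
      ← pow_add]
    congr 2
    omega
  · rw [if_neg hjk, if_neg (by omega), zero_mul]

theorem wker_eq_besselSeries (h : ℝ) (j : ℤ) (t : ℝ) :
    wker h j t = 1 / h * exp (-2 * t / h ^ 2) * besselSeries j (t / h ^ 2) := by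
  have hsupp : Function.support (besselTerm j (t / h ^ 2)) ⊆ Set.range ((↑) : ℕ → ℤ) :=
    (Function.support_mul_subset_right _ _).trans (support_expTerm_subset _)
  rw [wker, besselSeries, ← Nat.cast_injective.tsum_eq hsupp]
  simp only [wterm_eq_besselTerm]

theorem hasDerivAt_wker (h : ℝ) (j : ℤ) (t : ℝ) :
    HasDerivAt (wker h j) ((wker h (j + 1) t - 2 * wker h j t + wker h (j - 1) t) / h ^ 2) t := by
  have hexp : HasDerivAt (fun s => exp (-2 * s / h ^ 2)) (exp (-2 * t / h ^ 2) * (-2 / h ^ 2)) t :=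
    (((hasDerivAt_id' t).const_mul (-2)).div_const (h ^ 2)).exp.congr_deriv (by ring)
  have hbessel : HasDerivAt (fun s => besselSeries j (s / h ^ 2))
      ((besselSeries (j + 1) (t / h ^ 2) + besselSeries (j - 1) (t / h ^ 2)) * (1 / h ^ 2)) t :=
    (hasDerivAt_besselSeries j _).comp t ((hasDerivAt_id t).div_const (h ^ 2))
  rw [show wker h j = _ from funext (wker_eq_besselSeries h j)]
  simp only [wker_eq_besselSeries]
  exact ((hexp.const_mul (1 / h)).mul hbessel).congr_deriv (by ring)

theorem discrete_heat_kernel_one_dim_general (h : ℝ) :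
    (∀ (j : ℤ) (t : ℝ), 0 ≤ t → Summable fun k : ℕ => |wterm h j t k|) ∧
    (∀ j : ℤ, wker h j 0 = if j = 0 then 1 / h else 0) ∧
    (∀ (j : ℤ) (t : ℝ), 0 < t →
      HasDerivAt (fun s => wker h j s)
        ((wker h (j + 1) t - 2 * wker h j t + wker h (j - 1) t) / h ^ 2) t) := by
  refine ⟨fun j t _ => ?_, fun j => ?_, fun j t _ => hasDerivAt_wker h j t⟩
  · simp only [wterm_eq_besselTerm]
    exact (summable_abs_besselTerm j _).comp_injective Nat.cast_injective
  · rw [wker_eq_besselSeries, zero_div, besselSeries_zero_right]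
    split_ifs <;> simp

/-- The series defining the one-dimensional discrete heat kernel
converges absolutely for all `j, t ≥ 0`; the kernel has initial value `(1/h)δ`,
and for `t > 0` it solves the one-dimensional discrete heat equation. -/
theorem discrete_heat_kernel_one_dim (h : ℝ) (hh : 0 < h) :
    (∀ (j : ℤ) (t : ℝ), 0 ≤ t → Summable fun k : ℕ => |wterm h j t k|) ∧
    (∀ j : ℤ, wker h j 0 = if j = 0 then 1 / h else 0) ∧
    (∀ (j : ℤ) (t : ℝ), 0 < t →
      HasDerivAt (fun s => wker h j s)
        ((wker h (j + 1) t - 2 * wker h j t + wker h (j - 1) t) / h ^ 2) t) :=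
  discrete_heat_kernel_one_dim_general h
end
end

section
/- Fix d ≥ 1. There is a constant C = C(d) such that for every h > 0, every t > 0, every 1 ≤ i ≤ d and either sign σ ∈ {+,−}, the first differences of the d-dimensional discrete heat kernel satisfy sup_{j∈ℤ^d} |(D_{σi} Φ^h(t))_j| ≤ C t^{−(1/2 + d/2)}. -/
/-!
With `τ = t / h²` the one-dimensional kernel is `w^h_j(t) = h⁻¹ S_τ(j)`, where
`S_τ(j) = ∑ₙ p_τ(n) p_τ(n - j)` is the Skellam law of `X - Y` for independent `X, Y ∼ Poisson(τ)`.
Stirling's formula, together with the monotonicity of the Poisson weights `p_τ(m)` up to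
`m = ⌊τ⌋`, gives `sup p_τ ≤ τ^{-1/2}`, hence `S_τ ≤ τ^{-1/2}`. Since
`p_τ(m) - p_τ(m - 1) = p_τ(m) (1 - m / τ)` and the Poisson variance is `τ`, we get
`∑ₙ (p_τ(n) - p_τ(n - 1))² ≤ τ^{-3/2}`, and Cauchy–Schwarz yields `|S_τ(j + 1) - S_τ(j)| ≤ τ⁻¹`.
Scaling back, `w ≤ t^{-1/2}` and `|D₊w| ≤ t⁻¹`; a difference of the product kernel in direction `i`
only sees the `i`-th factor, so the bound holds with `C = 1`.
-/

noncomputable section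

/-- The `d`-dimensional discrete heat kernel `Φ^h_j(t) = ∏_{i=1}^d w^h_{j_i}(t)`. -/
def Phiker (h : ℝ) {d : ℕ} (j : Fin d → ℤ) (t : ℝ) : ℝ :=
  ∏ i : Fin d, wker h (j i) t

/-- Unit lattice vector in direction `i`. -/
def gunit {d : ℕ} (i : Fin d) : Fin d → ℤ := fun k => if k = i then 1 else 0

/-- Forward difference operator `D_{+i}`. -/
def fdiff {d : ℕ} {E : Type*} [NormedAddCommGroup E] [NormedSpace ℝ E]
    (h : ℝ) (i : Fin d) (u : (Fin d → ℤ) → E) : (Fin d → ℤ) → E :=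
  fun j => (h⁻¹ : ℝ) • (u (j + gunit i) - u j)

/-- Backward difference operator `D_{−i}`. -/
def bdiff {d : ℕ} {E : Type*} [NormedAddCommGroup E] [NormedSpace ℝ E]
    (h : ℝ) (i : Fin d) (u : (Fin d → ℤ) → E) : (Fin d → ℤ) → E :=
  fun j => (h⁻¹ : ℝ) • (u j - u (j - gunit i))

open Real Finset
open scoped Nat

def poissonWeight (τ : ℝ) (m : ℕ) : ℝ := exp (-τ) * τ ^ m / m !

section PoissonWeight

variable {τ : ℝ}

lemma poissonWeight_nonneg (hτ : 0 ≤ τ) (m : ℕ) : 0 ≤ poissonWeight τ m := by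
  unfold poissonWeight; positivity

lemma hasSum_poissonWeight (τ : ℝ) : HasSum (poissonWeight τ) 1 := by
  have := (NormedSpace.expSeries_div_hasSum_exp τ).mul_left (exp (-τ))
  rw [← exp_eq_exp_ℝ, ← exp_add, neg_add_cancel, exp_zero] at this
  show HasSum (fun m => exp (-τ) * τ ^ m / m !) 1
  simpa only [mul_div_assoc] using this

lemma poissonWeight_le_one (hτ : 0 ≤ τ) (m : ℕ) : poissonWeight τ m ≤ 1 :=
  le_hasSum (hasSum_poissonWeight τ) m fun n _ => poissonWeight_nonneg hτ n

lemma poissonWeight_succ_mul (τ : ℝ) (m : ℕ) :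
    poissonWeight τ (m + 1) * (m + 1) = τ * poissonWeight τ m := by
  unfold poissonWeight
  rw [Nat.factorial_succ, pow_succ]
  push_cast
  field_simp

lemma hasSum_poissonWeight_mul_self (τ : ℝ) :
    HasSum (fun m => poissonWeight τ m * m) τ := by
  rw [← hasSum_nat_add_iff' 1]
  simpa [poissonWeight_succ_mul] using (hasSum_poissonWeight τ).mul_left τ

lemma hasSum_poissonWeight_mul_mul_sub_one (τ : ℝ) :
    HasSum (fun m => poissonWeight τ m * (m * (m - 1))) (τ ^ 2) := by
  have shift (m : ℕ) : poissonWeight τ (m + 2) * ((m + 2) * (m + 2 - 1)) =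
      τ ^ 2 * poissonWeight τ m := by
    have h1 := poissonWeight_succ_mul τ (m + 1)
    have h2 := poissonWeight_succ_mul τ m
    push_cast at h1
    linear_combination ((m : ℝ) + 1) * h1 + τ * h2
  rw [← hasSum_nat_add_iff' 2]
  simpa [Finset.sum_range_succ, shift] using (hasSum_poissonWeight τ).mul_left (τ ^ 2)

lemma hasSum_poissonWeight_mul_sub_sq (τ : ℝ) :
    HasSum (fun m => poissonWeight τ m * (m - τ) ^ 2) τ := by
  convert ((hasSum_poissonWeight_mul_mul_sub_one τ).add
    ((hasSum_poissonWeight_mul_self τ).mul_left (1 - 2 * τ))).add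
    ((hasSum_poissonWeight τ).mul_left (τ ^ 2)) using 1
  · ext m; ring
  · ring

end PoissonWeight

section SupBound

variable {τ : ℝ}

lemma poissonWeight_le_inv_sqrt_two_pi_mul (hτ : 0 ≤ τ) {m : ℕ} (hm : m ≠ 0) :
    poissonWeight τ m ≤ (√(2 * π * m))⁻¹ := by
  have hm0 : (0 : ℝ) < m := by positivity
  have hpow : (exp 1 * (τ / m)) ^ m ≤ exp τ := by
    calc (exp 1 * (τ / m)) ^ m ≤ exp (τ / m) ^ m := by
          gcongr
          exact exp_one_mul_le_exp
      _ = exp τ := by rw [← exp_nat_mul]; field_simp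
  calc poissonWeight τ m ≤ exp (-τ) * τ ^ m / (√(2 * π * m) * (m / exp 1) ^ m) :=
        div_le_div_of_nonneg_left (by positivity) (by positivity) (Stirling.le_factorial_stirling m)
    _ = (√(2 * π * m))⁻¹ * (exp (-τ) * (exp 1 * (τ / m)) ^ m) := by
        rw [mul_pow, div_pow, div_pow]
        field_simp
    _ ≤ (√(2 * π * m))⁻¹ * (exp (-τ) * exp τ) := by gcongr
    _ = (√(2 * π * m))⁻¹ := by rw [← exp_add, neg_add_cancel, exp_zero, mul_one]

lemma poissonWeight_le_of_le {m n : ℕ} (hmn : m ≤ n) (hn : (n : ℝ) ≤ τ) :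
    poissonWeight τ m ≤ poissonWeight τ n := by
  induction n, hmn using Nat.le_induction with
  | base => exact le_rfl
  | succ n hmn ih =>
    push_cast at hn
    refine (ih (by linarith)).trans (le_of_mul_le_mul_right ?_ n.cast_add_one_pos)
    rw [poissonWeight_succ_mul, mul_comm τ]
    exact mul_le_mul_of_nonneg_left hn
      (poissonWeight_nonneg (by linarith [n.cast_nonneg (α := ℝ)]) n)

lemma poissonWeight_le_inv_sqrt (hτ : 0 < τ) (m : ℕ) : poissonWeight τ m ≤ (√τ)⁻¹ := by
  rcases lt_or_ge τ 1 with hτ1 | hτ1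
  · refine (poissonWeight_le_one hτ.le m).trans ?_
    rw [one_le_inv₀ (sqrt_pos.2 hτ)]
    exact sqrt_le_one.mpr hτ1.le
  set n := ⌊τ⌋₊
  have hn1 : 1 ≤ n := (Nat.one_le_floor_iff τ).2 hτ1
  have hτn : τ < n + 1 := Nat.lt_floor_add_one τ
  have tail (k : ℕ) (hk : n ≤ k) : poissonWeight τ k ≤ (√τ)⁻¹ := by
    have hk' : (n : ℝ) ≤ k := by exact_mod_cast hk
    have hn1' : (1 : ℝ) ≤ n := by exact_mod_cast hn1
    refine (poissonWeight_le_inv_sqrt_two_pi_mul hτ.le (by omega)).trans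
      (inv_anti₀ (sqrt_pos.2 hτ) (sqrt_le_sqrt ?_))
    nlinarith [pi_gt_three]
  rcases le_total n m with h | h
  · exact tail m h
  · exact (poissonWeight_le_of_le h (Nat.floor_le hτ.le)).trans (tail n le_rfl)

end SupBound

lemma abs_tsum_mul_le_sqrt_mul_sqrt {ι : Type*} {f g : ι → ℝ} (hf : Summable fun i => f i ^ 2)
    (hg : Summable fun i => g i ^ 2) :
    |∑' i, f i * g i| ≤ √(∑' i, f i ^ 2) * √(∑' i, g i ^ 2) := by
  have habs {u : ι → ℝ} (hu : Summable fun i => u i ^ 2) : Summable fun i => |u i| ^ (2 : ℝ) := by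
    simpa only [rpow_two, sq_abs] using hu
  have hfg : Summable fun i => |f i| * |g i| :=
    summable_mul_of_Lp_Lq_of_nonneg .two_two (fun i => abs_nonneg _) (fun i => abs_nonneg _)
      (habs hf) (habs hg)
  calc |∑' i, f i * g i| ≤ ∑' i, |f i| * |g i| := by
        simpa only [norm_eq_abs, abs_mul] using norm_tsum_le_tsum_norm (f := fun i => f i * g i)
          (by simpa only [norm_eq_abs, abs_mul] using hfg)
    _ ≤ (∑' i, |f i| ^ (2 : ℝ)) ^ (1 / 2 : ℝ) * (∑' i, |g i| ^ (2 : ℝ)) ^ (1 / 2 : ℝ) :=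
        inner_le_Lp_mul_Lq_tsum_of_nonneg .two_two (fun i => abs_nonneg _)
          (fun i => abs_nonneg _) (habs hf) (habs hg)
    _ = √(∑' i, f i ^ 2) * √(∑' i, g i ^ 2) := by
        simp only [rpow_two, sq_abs, sqrt_eq_rpow]

lemma eq_zero_of_notMem_range_natCast {M : Type*} [Zero M] {F : ℤ → M}
    (hF : ∀ n < 0, F n = 0) {n : ℤ} (hn : n ∉ Set.range ((↑) : ℕ → ℤ)) : F n = 0 :=
  hF n (not_le.1 fun h => hn ⟨n.toNat, Int.toNat_of_nonneg h⟩)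

lemma support_subset_range_natCast {M : Type*} [Zero M] {F : ℤ → M} (hF : ∀ n < 0, F n = 0) :
    Function.support F ⊆ Set.range ((↑) : ℕ → ℤ) :=
  fun _ hn => by_contra fun h => hn (eq_zero_of_notMem_range_natCast hF h)

def poissonWeightInt (τ : ℝ) (n : ℤ) : ℝ := if 0 ≤ n then poissonWeight τ n.toNat else 0

section PoissonWeightInt

variable {τ : ℝ}

@[simp]
lemma poissonWeightInt_natCast (τ : ℝ) (m : ℕ) : poissonWeightInt τ m = poissonWeight τ m := by
  simp [poissonWeightInt]

lemma poissonWeightInt_of_neg {n : ℤ} (hn : n < 0) : poissonWeightInt τ n = 0 :=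
  if_neg (not_le.2 hn)

lemma poissonWeightInt_nonneg (hτ : 0 ≤ τ) (n : ℤ) : 0 ≤ poissonWeightInt τ n := by
  unfold poissonWeightInt; split_ifs
  exacts [poissonWeight_nonneg hτ _, le_rfl]

lemma poissonWeightInt_le_one (hτ : 0 ≤ τ) (n : ℤ) : poissonWeightInt τ n ≤ 1 := by
  unfold poissonWeightInt; split_ifs
  exacts [poissonWeight_le_one hτ _, zero_le_one]

lemma poissonWeightInt_le_inv_sqrt (hτ : 0 < τ) (n : ℤ) : poissonWeightInt τ n ≤ (√τ)⁻¹ := by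
  unfold poissonWeightInt; split_ifs
  exacts [poissonWeight_le_inv_sqrt hτ _, by positivity]

lemma hasSum_poissonWeightInt (τ : ℝ) : HasSum (poissonWeightInt τ) 1 :=
  (Nat.cast_injective.hasSum_iff fun _ =>
    eq_zero_of_notMem_range_natCast fun _ => poissonWeightInt_of_neg).1
    (by simpa [Function.comp_def] using hasSum_poissonWeight τ)

lemma summable_sq_poissonWeightInt (hτ : 0 ≤ τ) : Summable fun n => poissonWeightInt τ n ^ 2 :=
  (hasSum_poissonWeightInt τ).summable.of_nonneg_of_le (fun _ => sq_nonneg _) fun n =>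
    pow_le_of_le_one (poissonWeightInt_nonneg hτ n) (poissonWeightInt_le_one hτ n) two_ne_zero

lemma tsum_sq_poissonWeightInt_le (hτ : 0 < τ) : ∑' n, poissonWeightInt τ n ^ 2 ≤ (√τ)⁻¹ := by
  refine hasSum_le (fun n => ?_) (summable_sq_poissonWeightInt hτ.le).hasSum
    ((hasSum_poissonWeightInt τ).mul_left (√τ)⁻¹) |>.trans_eq (mul_one _)
  rw [sq]
  exact mul_le_mul_of_nonneg_right (poissonWeightInt_le_inv_sqrt hτ n)
    (poissonWeightInt_nonneg hτ.le n)

lemma poissonWeightInt_natCast_sub_pred (hτ : τ ≠ 0) (m : ℕ) :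
    poissonWeightInt τ m - poissonWeightInt τ (m - 1) = poissonWeight τ m * (1 - m / τ) := by
  cases m with
  | zero => simpa [poissonWeightInt_of_neg] using poissonWeightInt_natCast τ 0
  | succ m =>
    have := poissonWeight_succ_mul τ m
    rw [Nat.cast_succ, add_sub_cancel_right, ← Nat.cast_add_one, poissonWeightInt_natCast,
      poissonWeightInt_natCast]
    push_cast
    field_simp
    linear_combination this

lemma sq_poissonWeightInt_natCast_sub_pred_le (hτ : 0 < τ) (m : ℕ) :
    (poissonWeightInt τ m - poissonWeightInt τ (m - 1)) ^ 2 ≤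
      (√τ)⁻¹ / τ ^ 2 * (poissonWeight τ m * (m - τ) ^ 2) := by
  rw [poissonWeightInt_natCast_sub_pred hτ.ne']
  have hP := poissonWeight_le_inv_sqrt hτ m
  have hmoment : 0 ≤ poissonWeight τ m * (m - τ) ^ 2 :=
    mul_nonneg (poissonWeight_nonneg hτ.le m) (sq_nonneg _)
  calc (poissonWeight τ m * (1 - m / τ)) ^ 2
        = poissonWeight τ m * (poissonWeight τ m * (m - τ) ^ 2) / τ ^ 2 := by
          field_simp; ring
    _ ≤ (√τ)⁻¹ * (poissonWeight τ m * (m - τ) ^ 2) / τ ^ 2 := by gcongr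
    _ = (√τ)⁻¹ / τ ^ 2 * (poissonWeight τ m * (m - τ) ^ 2) := by ring

lemma summable_and_tsum_sq_poissonWeightInt_sub_pred_le (hτ : 0 < τ) :
    Summable (fun n => (poissonWeightInt τ n - poissonWeightInt τ (n - 1)) ^ 2) ∧
      ∑' n, (poissonWeightInt τ n - poissonWeightInt τ (n - 1)) ^ 2 ≤ (√τ)⁻¹ / τ := by
  set F : ℤ → ℝ := fun n => (poissonWeightInt τ n - poissonWeightInt τ (n - 1)) ^ 2
  have hF : ∀ n < 0, F n = 0 := fun n hn => by
    simp [F, poissonWeightInt_of_neg hn, poissonWeightInt_of_neg (show n - 1 < 0 by omega)]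
  have hbound := (hasSum_poissonWeight_mul_sub_sq τ).mul_left ((√τ)⁻¹ / τ ^ 2)
  have hsummable : Summable fun m : ℕ => F m :=
    hbound.summable.of_nonneg_of_le (fun m => sq_nonneg _)
      (sq_poissonWeightInt_natCast_sub_pred_le hτ)
  refine ⟨(Nat.cast_injective.summable_iff fun _ => eq_zero_of_notMem_range_natCast hF).1 hsummable,
    ?_⟩
  rw [← Nat.cast_injective.tsum_eq (support_subset_range_natCast hF)]
  refine (hasSum_le (sq_poissonWeightInt_natCast_sub_pred_le hτ) hsummable.hasSum
    hbound).trans_eq ?_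
  field_simp

end PoissonWeightInt

/-- The law of `X - Y` for independent `X, Y ∼ Poisson(τ)`. -/
def skellam (τ : ℝ) (j : ℤ) : ℝ := ∑' n : ℤ, poissonWeightInt τ n * poissonWeightInt τ (n - j)

section Skellam

variable {τ : ℝ}

lemma summable_skellam (hτ : 0 ≤ τ) (j : ℤ) :
    Summable fun n => poissonWeightInt τ n * poissonWeightInt τ (n - j) :=
  (hasSum_poissonWeightInt τ).summable.of_nonneg_of_le
    (fun n => mul_nonneg (poissonWeightInt_nonneg hτ n) (poissonWeightInt_nonneg hτ _))
    fun n => mul_le_of_le_one_right (poissonWeightInt_nonneg hτ n) (poissonWeightInt_le_one hτ _)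

lemma skellam_nonneg (hτ : 0 ≤ τ) (j : ℤ) : 0 ≤ skellam τ j :=
  tsum_nonneg fun n => mul_nonneg (poissonWeightInt_nonneg hτ n) (poissonWeightInt_nonneg hτ _)

lemma skellam_le_inv_sqrt (hτ : 0 < τ) (j : ℤ) : skellam τ j ≤ (√τ)⁻¹ := by
  refine hasSum_le (fun n => ?_) (summable_skellam hτ.le j).hasSum
    ((hasSum_poissonWeightInt τ).mul_right (√τ)⁻¹) |>.trans_eq (one_mul _)
  exact mul_le_mul_of_nonneg_left (poissonWeightInt_le_inv_sqrt hτ _)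
    (poissonWeightInt_nonneg hτ.le n)

lemma abs_skellam_succ_sub_le (hτ : 0 < τ) (j : ℤ) :
    |skellam τ (j + 1) - skellam τ j| ≤ τ⁻¹ := by
  set q : ℤ → ℝ := fun n => poissonWeightInt τ n - poissonWeightInt τ (n - 1)
  obtain ⟨hq, hq_le⟩ := summable_and_tsum_sq_poissonWeightInt_sub_pred_le hτ
  have hdiff : skellam τ (j + 1) - skellam τ j = -∑' n, poissonWeightInt τ n * q (n - j) := by
    rw [skellam, skellam, ← (summable_skellam hτ.le _).tsum_sub (summable_skellam hτ.le _),
      ← tsum_neg]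
    exact tsum_congr fun n => by rw [show n - (j + 1) = n - j - 1 by ring]; ring
  have hshift : ∑' n, q (n - j) ^ 2 = ∑' n, q n ^ 2 :=
    (Equiv.subRight j).tsum_eq fun n => q n ^ 2
  have hq_shift : Summable fun n => q (n - j) ^ 2 :=
    (Equiv.subRight j).summable_iff.2 hq
  have hsqrt : √τ ^ 2 = τ := sq_sqrt hτ.le
  rw [hdiff, abs_neg]
  calc |∑' n, poissonWeightInt τ n * q (n - j)|
      ≤ √(∑' n, poissonWeightInt τ n ^ 2) * √(∑' n, q (n - j) ^ 2) :=
        abs_tsum_mul_le_sqrt_mul_sqrt (summable_sq_poissonWeightInt hτ.le) hq_shift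
    _ ≤ √(√τ)⁻¹ * √((√τ)⁻¹ / τ) := by
        rw [hshift]
        gcongr
        exact tsum_sq_poissonWeightInt_le hτ
    _ = τ⁻¹ := by
        rw [← sqrt_mul (by positivity), ← sqrt_sq (inv_nonneg.2 hτ.le)]
        congr 1
        field_simp
        rw [hsqrt]

end Skellam

section HeatKernel

variable {h t : ℝ}

lemma exp_mul_wterm (j : ℤ) (k : ℕ) :
    exp (-2 * t / h ^ 2) * wterm h j t k =
      poissonWeight (t / h ^ 2) k * poissonWeightInt (t / h ^ 2) (k - j) := by
  have hexp : exp (-2 * t / h ^ 2) = exp (-(t / h ^ 2)) * exp (-(t / h ^ 2)) := by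
    rw [← exp_add]; ring_nf
  unfold wterm
  split_ifs with hjk
  · obtain ⟨m, hm⟩ : ∃ m : ℕ, (k : ℤ) - j = m := ⟨_, (Int.toNat_of_nonneg (by omega)).symm⟩
    have hexponent : (2 * (k : ℤ) - j).toNat = k + m := by omega
    rw [hm, hexponent, Int.toNat_natCast, poissonWeightInt_natCast, poissonWeight, poissonWeight,
      pow_add, hexp]
    field_simp
  · rw [poissonWeightInt_of_neg (by omega), mul_zero, mul_zero]

lemma wker_eq_skellam (j : ℤ) : wker h j t = h⁻¹ * skellam (t / h ^ 2) j := by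
  have hvanish : ∀ n < 0,
      poissonWeightInt (t / h ^ 2) n * poissonWeightInt (t / h ^ 2) (n - j) = 0 :=
    fun n hn => by rw [poissonWeightInt_of_neg hn, zero_mul]
  rw [wker, one_div, mul_assoc, ← tsum_mul_left, skellam,
    ← Nat.cast_injective.tsum_eq (support_subset_range_natCast hvanish)]
  simp_rw [exp_mul_wterm, poissonWeightInt_natCast]

lemma sqrt_div_sq_eq (hh : 0 < h) (t : ℝ) : √(t / h ^ 2) = √t / h := by
  rw [sqrt_div' _ (sq_nonneg h), sqrt_sq hh.le]

lemma wker_nonneg (hh : 0 < h) (ht : 0 ≤ t) (j : ℤ) : 0 ≤ wker h j t := by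
  rw [wker_eq_skellam]
  exact mul_nonneg (inv_nonneg.2 hh.le) (skellam_nonneg (by positivity) j)

lemma wker_le_inv_sqrt (hh : 0 < h) (ht : 0 < t) (j : ℤ) : wker h j t ≤ (√t)⁻¹ := by
  rw [wker_eq_skellam]
  calc h⁻¹ * skellam (t / h ^ 2) j ≤ h⁻¹ * (√(t / h ^ 2))⁻¹ := by
        gcongr
        exact skellam_le_inv_sqrt (by positivity) j
    _ = (√t)⁻¹ := by
        rw [sqrt_div_sq_eq hh]
        field_simp

lemma abs_inv_mul_wker_succ_sub_le (hh : 0 < h) (ht : 0 < t) (j : ℤ) :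
    |h⁻¹ * (wker h (j + 1) t - wker h j t)| ≤ t⁻¹ := by
  rw [wker_eq_skellam, wker_eq_skellam, ← mul_sub, ← mul_assoc, abs_mul,
    abs_of_pos (by positivity : 0 < h⁻¹ * h⁻¹)]
  calc h⁻¹ * h⁻¹ * |skellam (t / h ^ 2) (j + 1) - skellam (t / h ^ 2) j|
      ≤ h⁻¹ * h⁻¹ * (t / h ^ 2)⁻¹ := by
        gcongr
        exact abs_skellam_succ_sub_le (by positivity) j
    _ = t⁻¹ := by field_simp

end HeatKernel

section Lattice

variable {d : ℕ} {h t : ℝ}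

lemma Phiker_update (j : Fin d → ℤ) (i : Fin d) (a : ℤ) :
    Phiker h (Function.update j i a) t = wker h a t * ∏ k ∈ univ.erase i, wker h (j k) t := by
  unfold Phiker
  simp_rw [Function.apply_update (fun _ n => wker h n t)]
  rw [prod_update_of_mem (mem_univ i), sdiff_singleton_eq_erase]

lemma prod_erase_wker_le (hh : 0 < h) (ht : 0 < t) (j : Fin d → ℤ) (i : Fin d) :
    ∏ k ∈ univ.erase i, wker h (j k) t ≤ (√t)⁻¹ ^ (d - 1) := by
  calc ∏ k ∈ univ.erase i, wker h (j k) t ≤ ∏ k ∈ univ.erase i, (√t)⁻¹ :=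
        prod_le_prod (fun k _ => wker_nonneg hh ht.le (j k)) fun k _ => wker_le_inv_sqrt hh ht (j k)
    _ = (√t)⁻¹ ^ (d - 1) := by simp [card_erase_of_mem]

lemma inv_mul_inv_sqrt_pow_pred (ht : 0 < t) (hd : d ≠ 0) :
    t⁻¹ * (√t)⁻¹ ^ (d - 1) = t ^ (-(1 / 2 + (d : ℝ) / 2)) := by
  obtain ⟨n, rfl⟩ : ∃ n, d = n + 1 := ⟨d - 1, by omega⟩
  rw [add_tsub_cancel_right, sqrt_eq_rpow, ← rpow_neg ht.le, ← rpow_mul_natCast ht.le,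
    ← rpow_neg_one, ← rpow_add ht]
  push_cast
  ring_nf

lemma abs_inv_mul_Phiker_update_succ_sub_le (hh : 0 < h) (ht : 0 < t) (j : Fin d → ℤ)
    (i : Fin d) (a : ℤ) :
    |h⁻¹ * (Phiker h (Function.update j i (a + 1)) t - Phiker h (Function.update j i a) t)| ≤
      t ^ (-(1 / 2 + (d : ℝ) / 2)) := by
  rw [Phiker_update, Phiker_update, ← sub_mul, ← mul_assoc, abs_mul,
    abs_of_nonneg (prod_nonneg fun k _ => wker_nonneg hh ht.le (j k)),
    ← inv_mul_inv_sqrt_pow_pred ht (Fin.pos i).ne']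
  exact mul_le_mul (abs_inv_mul_wker_succ_sub_le hh ht a) (prod_erase_wker_le hh ht j i)
    (prod_nonneg fun k _ => wker_nonneg hh ht.le (j k)) (inv_nonneg.2 ht.le)

lemma add_gunit_eq_update (j : Fin d → ℤ) (i : Fin d) :
    j + gunit i = Function.update j i (j i + 1) := by
  ext k
  by_cases hk : k = i
  · subst hk; simp [gunit]
  · simp [gunit, hk]

lemma sub_gunit_eq_update (j : Fin d → ℤ) (i : Fin d) :
    j - gunit i = Function.update j i (j i - 1) := by
  ext k
  by_cases hk : k = i
  · subst hk; simp [gunit]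
  · simp [gunit, hk]

end Lattice

theorem discrete_heat_kernel_diff_Linfty_bound_general (d : ℕ) :
    ∃ C : ℝ, 0 < C ∧
      ∀ h : ℝ, 0 < h → ∀ t : ℝ, 0 < t → ∀ i : Fin d, ∀ σ : Bool, ∀ j : Fin d → ℤ,
        |(if σ then fdiff h i (fun j' => Phiker h j' t)
            else bdiff h i (fun j' => Phiker h j' t)) j| ≤
          C * t ^ (-(1 / 2 + (d : ℝ) / 2)) := by
  refine ⟨1, one_pos, fun h hh t ht i σ j => ?_⟩
  rw [one_mul]
  cases σ with
  | true =>
    have key := abs_inv_mul_Phiker_update_succ_sub_le hh ht j i (j i)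
    rwa [Function.update_eq_self, ← add_gunit_eq_update] at key
  | false =>
    have key := abs_inv_mul_Phiker_update_succ_sub_le hh ht j i (j i - 1)
    rwa [sub_add_cancel, Function.update_eq_self, ← sub_gunit_eq_update] at key

/-- The first differences of the `d`-dimensional discrete heat
kernel satisfy `‖D_{σi}Φ^h(t)‖_{L^∞_h} ≤ C t^{−(1/2+d/2)}` with `C = C(d)`
independent of the mesh size (`σ = true` is the forward difference). -/
theorem discrete_heat_kernel_diff_Linfty_bound (d : ℕ) (hd : 1 ≤ d) :
    ∃ C : ℝ, 0 < C ∧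
      ∀ h : ℝ, 0 < h → ∀ t : ℝ, 0 < t → ∀ i : Fin d, ∀ σ : Bool, ∀ j : Fin d → ℤ,
        |(if σ then fdiff h i (fun j' => Phiker h j' t)
            else bdiff h i (fun j' => Phiker h j' t)) j| ≤
          C * t ^ (-(1 / 2 + (d : ℝ) / 2)) :=
  discrete_heat_kernel_diff_Linfty_bound_general d
end
end

section
/- Fix d ≥ 1. There is a constant C = C(d) such that for every h > 0, every t > 0, every 1 ≤ i ≤ d and either sign σ ∈ {+,−}, the first differences of the d-dimensional discrete heat kernel satisfy h^d ∑_{j∈ℤ^d} |(D_{σi} Φ^h(t))_j| ≤ C t^{−1/2}. -/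
noncomputable section

/-!
With `τ = t / h²` and `π_τ(n) = e^{-τ} τⁿ / n!` the Poisson weights,
`h w^h_j(t) = ∑ₖ π_τ(k) π_τ(k - j)` is the Skellam law of `X - Y` for independent Poisson(τ)
variables. So `h^d Φ^h(t)` is a product of probability distributions on `ℤ`, and `D_{±i}` only
hits the `i`-th factor. Averaging over `k`, the total variation of the Skellam law is at most that
of the Poisson law, `∑ₙ |π_τ(n - 1) - π_τ(n)| = ∑ₙ π_τ(n) |n - τ| / τ ≤ √τ / τ`, because the mean
absolute deviation is at most the standard deviation `√τ`. Hence
`h^d ∑ⱼ |D_{±i} Φ^h_j(t)| ≤ h⁻¹ τ^{-1/2} = t^{-1/2}`.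
-/

open Real Finset

namespace DiscreteHeatKernel

lemma tsum_comp_sub_left {G α : Type*} [AddCommGroup G] [AddCommMonoid α] [TopologicalSpace α]
    (f : G → α) (k : G) : ∑' j, f (k - j) = ∑' m, f m :=
  (Equiv.subLeft k).tsum_eq f

lemma tsum_int_eq_tsum_nat_of_neg {f : ℤ → ENNReal} (hf : ∀ n : ℕ, f (-(n + 1)) = 0) :
    ∑' m : ℤ, f m = ∑' n : ℕ, f n := by
  rw [tsum_of_nat_of_neg_add_one ENNReal.summable ENNReal.summable]
  simp only [hf, tsum_zero, add_zero]

lemma tsum_pi_prod {α : Type*} :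
    ∀ {n : ℕ} (F : Fin n → α → ENNReal), ∑' j : Fin n → α, ∏ l, F l (j l) = ∏ l, ∑' m, F l m
  | 0, F => by simp
  | n + 1, F => by
    rw [← (Fin.consEquiv fun _ => α).tsum_eq, ENNReal.tsum_prod', Fin.prod_univ_succ]
    simp only [Fin.consEquiv_apply, Fin.prod_univ_succ, Fin.cons_zero, Fin.cons_succ,
      ENNReal.tsum_mul_left, ENNReal.tsum_mul_right]
    rw [tsum_pi_prod]

lemma tsum_mul_prod_compl {α : Type*} {n : ℕ} (i : Fin n) (g f : α → ENNReal) :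
    ∑' j : Fin n → α, g (j i) * ∏ l ∈ {i}ᶜ, f (j l) = (∑' m, g m) * (∑' m, f m) ^ (n - 1) := by
  set F : Fin n → α → ENNReal := Function.update (fun _ => f) i g
  have hFi : F i = g := Function.update_self ..
  have hF : ∀ l ∈ ({i}ᶜ : Finset (Fin n)), F l = f := fun l hl =>
    Function.update_of_ne (by simpa using hl) ..
  have hprod (j : Fin n → α) : g (j i) * ∏ l ∈ {i}ᶜ, f (j l) = ∏ l, F l (j l) := by
    rw [Fintype.prod_eq_mul_prod_compl i, hFi, prod_congr rfl fun l hl => by rw [← hF l hl]]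
  rw [tsum_congr hprod, tsum_pi_prod, Fintype.prod_eq_mul_prod_compl i, hFi,
    prod_congr rfl fun l hl => by rw [hF l hl], prod_const, card_compl, card_singleton,
    Fintype.card_fin]

section Poisson

variable {τ : ℝ}

def poissonWeight (τ : ℝ) (n : ℕ) : ℝ := exp (-τ) * τ ^ n / n.factorial

lemma poissonWeight_nonneg (hτ : 0 ≤ τ) (n : ℕ) : 0 ≤ poissonWeight τ n := by
  unfold poissonWeight; positivity

lemma hasSum_poissonWeight (τ : ℝ) : HasSum (poissonWeight τ) 1 := by
  have h := (NormedSpace.expSeries_div_hasSum_exp τ).mul_left (exp (-τ))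
  rw [← exp_eq_exp_ℝ, ← exp_add, neg_add_cancel, exp_zero] at h
  exact h.congr_fun fun n => mul_div_assoc _ _ _

lemma tsum_ofReal_poissonWeight (hτ : 0 ≤ τ) : ∑' n, ENNReal.ofReal (poissonWeight τ n) = 1 := by
  rw [← ENNReal.ofReal_tsum_of_nonneg (poissonWeight_nonneg hτ) (hasSum_poissonWeight τ).summable,
    (hasSum_poissonWeight τ).tsum_eq, ENNReal.ofReal_one]

lemma poissonWeight_le_one (hτ : 0 ≤ τ) (n : ℕ) : poissonWeight τ n ≤ 1 :=
  le_hasSum (hasSum_poissonWeight τ) n fun m _ => poissonWeight_nonneg hτ m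

lemma succ_mul_poissonWeight_succ (τ : ℝ) (n : ℕ) :
    (n + 1) * poissonWeight τ (n + 1) = τ * poissonWeight τ n := by
  simp only [poissonWeight, Nat.factorial_succ, Nat.cast_mul, Nat.cast_succ, pow_succ]
  field_simp

lemma hasSum_mul_poissonWeight (τ : ℝ) : HasSum (fun n : ℕ => n * poissonWeight τ n) τ := by
  rw [← hasSum_nat_add_iff' 1]
  simpa [succ_mul_poissonWeight_succ] using (hasSum_poissonWeight τ).mul_left τ

lemma hasSum_descFactorial_mul_poissonWeight (τ : ℝ) :
    HasSum (fun n : ℕ => n * (n - 1) * poissonWeight τ n) (τ ^ 2) := by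
  rw [← hasSum_nat_add_iff' 2]
  have h (n : ℕ) : ((n + 2 : ℕ) : ℝ) * ((n + 2 : ℕ) - 1) * poissonWeight τ (n + 2)
      = τ ^ 2 * poissonWeight τ n := by
    have h₁ := succ_mul_poissonWeight_succ τ (n + 1)
    have h₂ := succ_mul_poissonWeight_succ τ n
    push_cast at h₁ ⊢
    linear_combination (n + 1 : ℝ) * h₁ + τ * h₂
  simpa [sum_range_succ] using ((hasSum_poissonWeight τ).mul_left (τ ^ 2)).congr_fun h

lemma hasSum_sq_sub_mul_poissonWeight (τ : ℝ) :
    HasSum (fun n : ℕ => (n - τ) ^ 2 * poissonWeight τ n) τ := by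
  convert (hasSum_descFactorial_mul_poissonWeight τ).add
    (((hasSum_mul_poissonWeight τ).mul_left (1 - 2 * τ)).add
      ((hasSum_poissonWeight τ).mul_left (τ ^ 2))) using 1
  · ext n; ring
  · ring

lemma tsum_ofReal_abs_sub_mul_poissonWeight_le (hτ : 0 < τ) :
    ∑' n : ℕ, ENNReal.ofReal (|n - τ| * poissonWeight τ n) ≤ ENNReal.ofReal √τ := by
  -- mean absolute deviation ≤ standard deviation, via `2 √τ |x| ≤ x ^ 2 + τ`
  have hbound : HasSum (fun n : ℕ => ((n - τ) ^ 2 * poissonWeight τ n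
      + τ * poissonWeight τ n) / (2 * √τ)) √τ := by
    have hval : (τ + τ * 1) / (2 * √τ) = √τ := by
      field_simp
      rw [sq_sqrt hτ.le]; ring
    simpa only [hval] using ((hasSum_sq_sub_mul_poissonWeight τ).add
      ((hasSum_poissonWeight τ).mul_left τ)).div_const (2 * √τ)
  rw [← hbound.tsum_eq, ENNReal.ofReal_tsum_of_nonneg
    (fun n => by have := poissonWeight_nonneg hτ.le n; positivity) hbound.summable]
  refine ENNReal.tsum_le_tsum fun n => ENNReal.ofReal_le_ofReal ?_
  rw [le_div_iff₀ (by positivity)]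
  have hamgm : 2 * √τ * |(n : ℝ) - τ| ≤ (n - τ) ^ 2 + τ := by
    nlinarith [sq_nonneg (|(n : ℝ) - τ| - √τ), sq_abs ((n : ℝ) - τ), sq_sqrt hτ.le]
  nlinarith [mul_le_mul_of_nonneg_right hamgm (poissonWeight_nonneg hτ.le n)]

def poissonWeightInt (τ : ℝ) (m : ℤ) : ℝ := if 0 ≤ m then poissonWeight τ m.toNat else 0

@[simp]
lemma poissonWeightInt_natCast (τ : ℝ) (n : ℕ) : poissonWeightInt τ n = poissonWeight τ n := by
  simp [poissonWeightInt]

lemma poissonWeightInt_of_neg {m : ℤ} (hm : m < 0) : poissonWeightInt τ m = 0 :=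
  if_neg hm.not_ge

lemma poissonWeightInt_nonneg (hτ : 0 ≤ τ) (m : ℤ) : 0 ≤ poissonWeightInt τ m := by
  unfold poissonWeightInt; split_ifs
  exacts [poissonWeight_nonneg hτ _, le_rfl]

lemma poissonWeightInt_le_one (hτ : 0 ≤ τ) (m : ℤ) : poissonWeightInt τ m ≤ 1 := by
  unfold poissonWeightInt; split_ifs
  exacts [poissonWeight_le_one hτ _, zero_le_one]

lemma tsum_ofReal_poissonWeightInt (hτ : 0 ≤ τ) :
    ∑' m : ℤ, ENNReal.ofReal (poissonWeightInt τ m) = 1 := by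
  rw [tsum_int_eq_tsum_nat_of_neg fun n => by rw [poissonWeightInt_of_neg (by omega),
    ENNReal.ofReal_zero]]
  simp_rw [poissonWeightInt_natCast]
  exact tsum_ofReal_poissonWeight hτ

lemma sub_one_sub_poissonWeightInt_mul (τ : ℝ) (n : ℕ) :
    (poissonWeightInt τ (n - 1) - poissonWeightInt τ n) * τ = (n - τ) * poissonWeight τ n := by
  cases n with
  | zero => simp [poissonWeightInt, mul_comm]
  | succ n =>
    have h := succ_mul_poissonWeight_succ τ n
    rw [Nat.cast_succ, add_sub_cancel_right, ← Nat.cast_succ, poissonWeightInt_natCast,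
      poissonWeightInt_natCast]
    push_cast at h ⊢
    linear_combination -h

lemma abs_poissonWeightInt_sub_one_sub (hτ : 0 < τ) (n : ℕ) :
    |poissonWeightInt τ (n - 1) - poissonWeightInt τ n| = |n - τ| * poissonWeight τ n / τ := by
  rw [eq_div_iff hτ.ne']
  calc _ = |(poissonWeightInt τ (n - 1) - poissonWeightInt τ n) * τ| := by
        rw [abs_mul, abs_of_pos hτ]
    _ = _ := by
        rw [sub_one_sub_poissonWeightInt_mul, abs_mul, abs_of_nonneg (poissonWeight_nonneg hτ.le n)]

lemma tsum_ofReal_abs_poissonWeightInt_sub_le (hτ : 0 < τ) :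
    ∑' m : ℤ, ENNReal.ofReal |poissonWeightInt τ (m - 1) - poissonWeightInt τ m|
      ≤ ENNReal.ofReal (√τ)⁻¹ := by
  rw [tsum_int_eq_tsum_nat_of_neg fun n => by
    rw [poissonWeightInt_of_neg (by omega), poissonWeightInt_of_neg (by omega)]; simp]
  simp_rw [abs_poissonWeightInt_sub_one_sub hτ, div_eq_mul_inv,
    ENNReal.ofReal_mul' (inv_nonneg.2 hτ.le)]
  calc _ = (∑' n : ℕ, ENNReal.ofReal (|n - τ| * poissonWeight τ n)) * ENNReal.ofReal τ⁻¹ :=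
        ENNReal.tsum_mul_right
    _ ≤ ENNReal.ofReal √τ * ENNReal.ofReal τ⁻¹ := by
        gcongr
        exact tsum_ofReal_abs_sub_mul_poissonWeight_le hτ
    _ = ENNReal.ofReal (√τ)⁻¹ := by
        rw [← ENNReal.ofReal_mul (sqrt_nonneg τ), ← div_eq_mul_inv, sqrt_div_self]

def skellamWeight (τ : ℝ) (j : ℤ) : ℝ :=
  ∑' k : ℕ, poissonWeight τ k * poissonWeightInt τ (k - j)

lemma summable_poissonWeight_mul_poissonWeightInt (hτ : 0 ≤ τ) (j : ℤ) :
    Summable fun k : ℕ => poissonWeight τ k * poissonWeightInt τ (k - j) :=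
  (hasSum_poissonWeight τ).summable.of_nonneg_of_le
    (fun k => mul_nonneg (poissonWeight_nonneg hτ k) (poissonWeightInt_nonneg hτ _))
    (fun k => mul_le_of_le_one_right (poissonWeight_nonneg hτ k) (poissonWeightInt_le_one hτ _))

lemma skellamWeight_nonneg (hτ : 0 ≤ τ) (j : ℤ) : 0 ≤ skellamWeight τ j :=
  tsum_nonneg fun k => mul_nonneg (poissonWeight_nonneg hτ k) (poissonWeightInt_nonneg hτ _)

lemma tsum_ofReal_skellamWeight (hτ : 0 ≤ τ) :
    ∑' j : ℤ, ENNReal.ofReal (skellamWeight τ j) = 1 := by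
  calc ∑' j : ℤ, ENNReal.ofReal (skellamWeight τ j)
      = ∑' (j : ℤ) (k : ℕ),
          ENNReal.ofReal (poissonWeight τ k) * ENNReal.ofReal (poissonWeightInt τ (k - j)) := by
        refine tsum_congr fun j => ?_
        rw [skellamWeight, ENNReal.ofReal_tsum_of_nonneg
          (fun k => mul_nonneg (poissonWeight_nonneg hτ k) (poissonWeightInt_nonneg hτ _))
          (summable_poissonWeight_mul_poissonWeightInt hτ j)]
        exact tsum_congr fun k => ENNReal.ofReal_mul (poissonWeight_nonneg hτ k)
    _ = ∑' k : ℕ, ENNReal.ofReal (poissonWeight τ k) *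
          ∑' j : ℤ, ENNReal.ofReal (poissonWeightInt τ (k - j)) := by
        rw [ENNReal.tsum_comm]
        exact tsum_congr fun k => ENNReal.tsum_mul_left
    _ = 1 := by
        simp_rw [tsum_comp_sub_left (fun m => ENNReal.ofReal (poissonWeightInt τ m)),
          tsum_ofReal_poissonWeightInt hτ, mul_one]
        exact tsum_ofReal_poissonWeight hτ

lemma ofReal_abs_skellamWeight_succ_sub_le (hτ : 0 ≤ τ) (j : ℤ) :
    ENNReal.ofReal |skellamWeight τ (j + 1) - skellamWeight τ j|
      ≤ ∑' k : ℕ, ENNReal.ofReal (poissonWeight τ k) *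
          ENNReal.ofReal |poissonWeightInt τ (k - j - 1) - poissonWeightInt τ (k - j)| := by
  rw [skellamWeight, skellamWeight, ← (summable_poissonWeight_mul_poissonWeightInt hτ _).tsum_sub
    (summable_poissonWeight_mul_poissonWeightInt hτ j), ← Real.enorm_eq_ofReal_abs]
  refine enorm_tsum_le_tsum_enorm.trans_eq (tsum_congr fun k => ?_)
  rw [← mul_sub, enorm_mul, Real.enorm_of_nonneg (poissonWeight_nonneg hτ k),
    Real.enorm_eq_ofReal_abs, sub_add_eq_sub_sub]

lemma tsum_ofReal_abs_skellamWeight_succ_sub_le (hτ : 0 < τ) :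
    ∑' j : ℤ, ENNReal.ofReal |skellamWeight τ (j + 1) - skellamWeight τ j|
      ≤ ENNReal.ofReal (√τ)⁻¹ := by
  calc ∑' j : ℤ, ENNReal.ofReal |skellamWeight τ (j + 1) - skellamWeight τ j|
      ≤ ∑' (j : ℤ) (k : ℕ), ENNReal.ofReal (poissonWeight τ k) *
          ENNReal.ofReal |poissonWeightInt τ (k - j - 1) - poissonWeightInt τ (k - j)| :=
        ENNReal.tsum_le_tsum fun j => ofReal_abs_skellamWeight_succ_sub_le hτ.le j
    _ = ∑' k : ℕ, ENNReal.ofReal (poissonWeight τ k) * ∑' m : ℤ,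
          ENNReal.ofReal |poissonWeightInt τ (m - 1) - poissonWeightInt τ m| := by
        rw [ENNReal.tsum_comm]
        refine tsum_congr fun k => ?_
        rw [ENNReal.tsum_mul_left]
        simp_rw [tsum_comp_sub_left
          (fun m => ENNReal.ofReal |poissonWeightInt τ (m - 1) - poissonWeightInt τ m|)]
    _ ≤ ∑' k : ℕ, ENNReal.ofReal (poissonWeight τ k) * ENNReal.ofReal (√τ)⁻¹ := by
        gcongr
        exact tsum_ofReal_abs_poissonWeightInt_sub_le hτ
    _ = ENNReal.ofReal (√τ)⁻¹ := by
        rw [ENNReal.tsum_mul_right, tsum_ofReal_poissonWeight hτ.le, one_mul]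

end Poisson

section Kernel

variable {h t : ℝ} {d : ℕ}

lemma exp_mul_wterm (j : ℤ) (k : ℕ) :
    exp (-2 * t / h ^ 2) * wterm h j t k
      = poissonWeight (t / h ^ 2) k * poissonWeightInt (t / h ^ 2) (k - j) := by
  rw [wterm, poissonWeightInt]
  split_ifs
  · obtain ⟨n, rfl⟩ : ∃ n : ℕ, (k : ℤ) - n = j := ⟨(k - j).toNat, by omega⟩
    have hexp : (2 * (k : ℤ) - (k - n)).toNat = k + n := by omega
    simp only [sub_sub_cancel, Int.toNat_natCast, hexp, poissonWeight, pow_add]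
    rw [show -2 * t / h ^ 2 = -(t / h ^ 2) + -(t / h ^ 2) by ring, exp_add]
    field_simp
  · omega
  · omega
  · rw [mul_zero, mul_zero]

lemma mul_wker_eq_skellamWeight (hh : h ≠ 0) (j : ℤ) :
    h * wker h j t = skellamWeight (t / h ^ 2) j := by
  rw [wker, skellamWeight, mul_assoc, ← tsum_mul_left, ← mul_assoc, mul_one_div_cancel hh, one_mul]
  exact tsum_congr (exp_mul_wterm j)

lemma pow_mul_Phiker (hh : h ≠ 0) (j : Fin d → ℤ) :
    h ^ d * Phiker h j t = ∏ l, skellamWeight (t / h ^ 2) (j l) := by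
  simp_rw [Phiker, ← mul_wker_eq_skellamWeight hh, prod_mul_distrib, prod_const, card_univ,
    Fintype.card_fin]

lemma prod_add_gunit_sub_prod {R : Type*} [CommRing R] (p : ℤ → R) (i : Fin d) (j : Fin d → ℤ) :
    ∏ l, p ((j + gunit i) l) - ∏ l, p (j l)
      = (p (j i + 1) - p (j i)) * ∏ l ∈ {i}ᶜ, p (j l) := by
  have hcompl : ∏ l ∈ {i}ᶜ, p ((j + gunit i) l) = ∏ l ∈ {i}ᶜ, p (j l) :=
    prod_congr rfl fun l hl => by
      rw [mem_compl, mem_singleton] at hl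
      simp [gunit, hl]
  rw [Fintype.prod_eq_mul_prod_compl i, Fintype.prod_eq_mul_prod_compl i (fun l => p (j l)),
    hcompl]
  simp [gunit, sub_mul]

lemma pow_mul_abs_fdiff_Phiker (hh : 0 < h) (ht : 0 ≤ t) (i : Fin d) (j : Fin d → ℤ) :
    h ^ d * |fdiff h i (fun j' => Phiker h j' t) j|
      = h⁻¹ * |skellamWeight (t / h ^ 2) (j i + 1) - skellamWeight (t / h ^ 2) (j i)|
          * ∏ l ∈ {i}ᶜ, skellamWeight (t / h ^ 2) (j l) := by
  have hτ : 0 ≤ t / h ^ 2 := by positivity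
  rw [fdiff, smul_eq_mul, abs_mul, abs_of_pos (inv_pos.2 hh), mul_left_comm,
    ← abs_of_pos (pow_pos hh d), ← abs_mul, mul_sub,
    pow_mul_Phiker hh.ne', pow_mul_Phiker hh.ne', prod_add_gunit_sub_prod, abs_mul,
    abs_of_nonneg (prod_nonneg fun l _ => skellamWeight_nonneg hτ _), mul_assoc]

lemma inv_mul_inv_sqrt_div_sq (hh : 0 < h) (ht : 0 ≤ t) :
    h⁻¹ * (√(t / h ^ 2))⁻¹ = t ^ (-(1 / 2 : ℝ)) := by
  rw [sqrt_div' _ (sq_nonneg h), sqrt_sq hh.le, inv_div, ← mul_div_assoc, inv_mul_cancel₀ hh.ne',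
    rpow_neg ht, ← sqrt_eq_rpow, one_div]

lemma tsum_ofReal_pow_mul_abs_fdiff_Phiker_le (hh : 0 < h) (ht : 0 < t) (i : Fin d) :
    ∑' j, ENNReal.ofReal (h ^ d * |fdiff h i (fun j' => Phiker h j' t) j|)
      ≤ ENNReal.ofReal (t ^ (-(1 / 2 : ℝ))) := by
  set s := skellamWeight (t / h ^ 2)
  have hτ : 0 < t / h ^ 2 := by positivity
  have hterm (j : Fin d → ℤ) : ENNReal.ofReal (h ^ d * |fdiff h i (fun j' => Phiker h j' t) j|)
      = ENNReal.ofReal (h⁻¹ * |s (j i + 1) - s (j i)|) * ∏ l ∈ {i}ᶜ, ENNReal.ofReal (s (j l)) := by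
    rw [pow_mul_abs_fdiff_Phiker hh ht.le, ENNReal.ofReal_mul (by positivity),
      ENNReal.ofReal_prod_of_nonneg fun l _ => skellamWeight_nonneg hτ.le _]
  rw [tsum_congr hterm, tsum_mul_prod_compl i (fun m => ENNReal.ofReal (h⁻¹ * |s (m + 1) - s m|))
    fun m => ENNReal.ofReal (s m), tsum_ofReal_skellamWeight hτ.le, one_pow, mul_one]
  simp_rw [ENNReal.ofReal_mul (inv_nonneg.2 hh.le)]
  rw [ENNReal.tsum_mul_left, ← inv_mul_inv_sqrt_div_sq hh ht.le,
    ENNReal.ofReal_mul (inv_nonneg.2 hh.le)]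
  gcongr
  exact tsum_ofReal_abs_skellamWeight_succ_sub_le hτ

lemma tsum_comp_bdiff {E : Type*} [NormedAddCommGroup E] [NormedSpace ℝ E] (F : E → ENNReal)
    (i : Fin d) (u : (Fin d → ℤ) → E) :
    ∑' j, F (bdiff h i u j) = ∑' j, F (fdiff h i u j) := by
  have hshift (j : Fin d → ℤ) : bdiff h i u j = fdiff h i u (j - gunit i) := by
    simp [bdiff, fdiff]
  simp_rw [hshift]
  exact (Equiv.subRight (gunit i)).tsum_eq fun j => F (fdiff h i u j)

end Kernel

end DiscreteHeatKernel

theorem discrete_heat_kernel_diff_L1_bound_general (d : ℕ) :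
    ∃ C : ℝ, 0 < C ∧
      ∀ h : ℝ, 0 < h → ∀ t : ℝ, 0 < t → ∀ i : Fin d, ∀ σ : Bool,
        ∑' j : Fin d → ℤ,
            ENNReal.ofReal (h ^ d *
              |(if σ then fdiff h i (fun j' => Phiker h j' t)
                  else bdiff h i (fun j' => Phiker h j' t)) j|) ≤
          ENNReal.ofReal (C * t ^ (-(1 / 2 : ℝ))) := by
  refine ⟨1, one_pos, fun h hh t ht i σ => ?_⟩
  rw [one_mul]
  cases σ
  · simpa only [Bool.false_eq_true, if_false,
      DiscreteHeatKernel.tsum_comp_bdiff (fun x => ENNReal.ofReal (h ^ d * |x|))] using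
      DiscreteHeatKernel.tsum_ofReal_pow_mul_abs_fdiff_Phiker_le hh ht i
  · exact DiscreteHeatKernel.tsum_ofReal_pow_mul_abs_fdiff_Phiker_le hh ht i

/-- The first differences of the `d`-dimensional discrete heat
kernel satisfy `‖D_{σi}Φ^h(t)‖_{L¹_h} ≤ C t^{−1/2}` with `C = C(d)` independent of
the mesh size (`σ = true` is the forward difference). -/
theorem discrete_heat_kernel_diff_L1_bound (d : ℕ) (hd : 1 ≤ d) :
    ∃ C : ℝ, 0 < C ∧
      ∀ h : ℝ, 0 < h → ∀ t : ℝ, 0 < t → ∀ i : Fin d, ∀ σ : Bool,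
        ∑' j : Fin d → ℤ,
            ENNReal.ofReal (h ^ d *
              |(if σ then fdiff h i (fun j' => Phiker h j' t)
                  else bdiff h i (fun j' => Phiker h j' t)) j|) ≤
          ENNReal.ofReal (C * t ^ (-(1 / 2 : ℝ))) :=
  discrete_heat_kernel_diff_L1_bound_general d
end
end
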